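/- Let I be a support-2 monomial ideal in K[x_i,x_j,x_k] whose underlying graph is the triangle on x_i,x_j,x_k, with exactly one minimal generator on each of the edges {x_i,x_k} and {x_j,x_k} (with x_i-exponent w_{i,k} and x_j-exponent w_{j,k} respectively), and at least two minimal generators on {x_i,x_j}. Then the maximal ideal ⟨x_i,x_j,x_k⟩ is NOT an associated prime of I if and only if w_{i,k} ≥ μ_{i,j} and w_{j,k} ≥ μ_{j,i}, where μ_{i,j} (resp. μ_{j,i}) is the maximal exponent of x_i (resp. x_j) among generators supported on {x_i,x_j}. -/

import Mathlib

set_option synthInstance.maxHeartbeats 1000000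
set_option maxHeartbeats 1000000

open MvPolynomial

section Defs

variable {K : Type*} [Field K] {σ : Type*}

/-- `I` is a monomial ideal. -/
def IsMonomialIdeal (I : Ideal (MvPolynomial σ K)) : Prop :=
  ∃ A : Set (σ →₀ ℕ), I = Ideal.span ((fun a => (monomial a (1 : K) : MvPolynomial σ K)) '' A)

/-- Exponent vectors of the minimal monomial generators of `I`. -/
def minGens (I : Ideal (MvPolynomial σ K)) : Set (σ →₀ ℕ) :=
  {a | (monomial a (1 : K) : MvPolynomial σ K) ∈ I ∧
    ∀ b : σ →₀ ℕ, (monomial b (1 : K) : MvPolynomial σ K) ∈ I → b ≤ a → b = a}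

/-- A support-2 monomial ideal: every minimal monomial generator is supported
on exactly two variables. -/
def IsSupportTwo (I : Ideal (MvPolynomial σ K)) : Prop :=
  ∀ a ∈ minGens I, a.support.card = 2

variable [DecidableEq σ]

/-- Minimal monomial generators of `I` supported on `{i, j}`. -/
def supportedOn (I : Ideal (MvPolynomial σ K)) (i j : σ) : Set (σ →₀ ℕ) :=
  {a | a ∈ minGens I ∧ a.support = {i, j}}

/-- `ν_{i,j}`: the minimum exponent of `x_i` among the minimal generators of `I`
supported on `{i, j}`. -/
noncomputable def nuExp (I : Ideal (MvPolynomial σ K)) (i j : σ) : ℕ :=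
  sInf ((fun a => a i) '' supportedOn I i j)

/-- `μ_{i,j}`: the maximum exponent of `x_i` among the minimal generators of `I`
supported on `{i, j}`. -/
noncomputable def muExp (I : Ideal (MvPolynomial σ K)) (i j : σ) : ℕ :=
  sSup ((fun a => a i) '' supportedOn I i j)

/-- The underlying simple graph `G(I)` of a support-2 monomial ideal. -/
def underGraph (I : Ideal (MvPolynomial σ K)) : SimpleGraph σ where
  Adj i j := i ≠ j ∧ (supportedOn I i j).Nonempty
  symm := ⟨by
    rintro i j ⟨hij, a, hmin, hs⟩
    exact ⟨hij.symm, a, hmin, by rw [hs, Finset.pair_comm]⟩⟩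
  loopless := ⟨fun i h => h.1 rfl⟩

end Defs

section Symbolic

variable {R : Type*} [CommRing R]

/-- The component of `I` at a prime `P`, namely `I S_P ∩ S`. -/
noncomputable def localizedComponent (I P : Ideal R) (hP : P.IsPrime) : Ideal R :=
  letI := hP
  (I.map (algebraMap R (Localization.AtPrime P))).comap
    (algebraMap R (Localization.AtPrime P))

/-- The `s`-th symbolic power `I^{(s)} = ⋂_{P ∈ MinAss(I)} (I^s S_P ∩ S)`. -/
noncomputable def symbolicPower (I : Ideal R) (s : ℕ) : Ideal R :=
  ⨅ P : I.minimalPrimes, localizedComponent (I ^ s) P.1 P.2.1.1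

/-- A Simis ideal: `I^{(s)} = I^s` for all `s ≥ 1`. -/
def IsSimis (I : Ideal R) : Prop := ∀ s : ℕ, 1 ≤ s → symbolicPower I s = I ^ s

/-- `I` has no embedded associated primes. -/
def NoEmbeddedPrimes (I : Ideal R) : Prop :=
  ∀ P ∈ associatedPrimes R (R ⧸ I), P ∈ I.minimalPrimes

end Symbolic

section Decomp

variable {K : Type*} [Field K] {σ : Type*}

/-- An irreducible monomial ideal: generated by pure powers of variables. -/
def IsIrredMonomialIdeal (Q : Ideal (MvPolynomial σ K)) : Prop :=
  ∃ (t : Finset σ) (e : σ → ℕ), (∀ i ∈ t, 1 ≤ e i) ∧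
    Q = Ideal.span ((fun i => (X i : MvPolynomial σ K) ^ e i) '' t)

/-- `I` has a minimal (irredundant, distinct radicals) irreducible decomposition. -/
def HasMinimalIrredDecomp (I : Ideal (MvPolynomial σ K)) : Prop :=
  ∃ (r : ℕ) (Q : Fin r → Ideal (MvPolynomial σ K)),
    (∀ k, IsIrredMonomialIdeal (Q k)) ∧ I = ⨅ k, Q k ∧
    (∀ k, (⨅ l ∈ ({k}ᶜ : Set (Fin r)), Q l) ≠ I) ∧
    (∀ k l, k ≠ l → (Q k).radical ≠ (Q l).radical)

/-- The ideal obtained from `J` by the standard linear weighting `x_i ↦ x_i^{d_i}`. -/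
noncomputable def weightedIdeal (d : σ → ℕ) (J : Ideal (MvPolynomial σ K)) : Ideal (MvPolynomial σ K) :=
  Ideal.span {m | ∃ a ∈ minGens J, ∃ b : σ →₀ ℕ,
    (∀ i, b i = d i * a i) ∧ m = (monomial b (1 : K) : MvPolynomial σ K)}

/-- `I` has a standard linear weighting: there are `d_i ≥ 1` such that every
minimal generator supported on `{i,j}` is `x_i^{d_i} x_j^{d_j}`. -/
def HasStdWeighting (I : Ideal (MvPolynomial σ K)) : Prop :=
  ∃ d : σ → ℕ, (∀ i, 1 ≤ d i) ∧ ∀ a ∈ minGens I, ∀ i ∈ a.support, a i = d i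

variable (K) in
/-- The edge ideal of a simple graph. -/
noncomputable def edgeIdeal (G : SimpleGraph σ) : Ideal (MvPolynomial σ K) :=
  Ideal.span {m | ∃ i j, G.Adj i j ∧ m = (X i * X j : MvPolynomial σ K)}

end Decomp

section Graph

variable {σ : Type*}

/-- A vertex cover of a simple graph. -/
def IsVertexCover (G : SimpleGraph σ) (C : Set σ) : Prop :=
  ∀ ⦃i j⦄, G.Adj i j → i ∈ C ∨ j ∈ C

/-- A minimal vertex cover of a simple graph. -/
def IsMinimalVertexCover (G : SimpleGraph σ) (C : Set σ) : Prop :=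
  IsVertexCover G C ∧ ∀ D ⊆ C, IsVertexCover G D → D = C

end Graph

section CM

variable {K : Type*} [Field K] {σ : Type*}

/-- The depth of `S/I` with respect to the irrelevant maximal ideal
`⟨x_1, …, x_n⟩`: the supremum of lengths of regular sequences on `S/I`
consisting of elements of that ideal. -/
noncomputable def quotDepth (I : Ideal (MvPolynomial σ K)) : ℕ∞ :=
  sSup {n : ℕ∞ | ∃ rs : List (MvPolynomial σ K), (rs.length : ℕ∞) = n ∧
    (∀ r ∈ rs, r ∈ Ideal.span (Set.range (X : σ → MvPolynomial σ K))) ∧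
    RingTheory.Sequence.IsRegular (MvPolynomial σ K ⧸ I)
      (rs.map (Ideal.Quotient.mk I))}

/-- `S/I` is Cohen–Macaulay: depth equals Krull dimension. -/
def IsCohenMacaulayQuot (I : Ideal (MvPolynomial σ K)) : Prop :=
  (quotDepth I : WithBot ℕ∞) = ringKrullDim (MvPolynomial σ K ⧸ I)

/-- The height of a prime ideal, as the Krull dimension of the localization. -/
noncomputable def primeHeight' {R : Type*} [CommRing R] (P : Ideal R) (hP : P.IsPrime) :
    WithBot ℕ∞ :=
  letI := hP
  ringKrullDim (Localization.AtPrime P)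

/-- `I` is unmixed: all associated primes of `S/I` have the same height. -/
def IsUnmixed {R : Type*} [CommRing R] (I : Ideal R) : Prop :=
  ∀ P, ∀ hP : P ∈ associatedPrimes R (R ⧸ I), ∀ Q, ∀ hQ : Q ∈ associatedPrimes R (R ⧸ I),
    primeHeight' P hP.1 = primeHeight' Q hQ.1

end CM

/-!
For a monomial ideal `I`, the maximal ideal `𝔪` is associated exactly when some monomial
`u ∉ I` has `x_l u ∈ I` for every variable `x_l`. In three variables, write the generators of
`I` on the edge `{i, j}` as `x_i^p x_j^q` with `(p, q)` in an antichain `E ⊆ ℕ²`. If all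
`p ≤ w_{i,k}` and all `q ≤ w_{j,k}`, no such `u` exists: when `x_i^{w_{i,k}} x_k^{w_{k,i}}`
divides `x_k u`, whatever divides `x_i u` already divides `u`, and likewise for `j`.
Conversely, if some `p > w_{i,k}` (the case `q > w_{j,k}` is symmetric), let `(p₀, q₀) ∈ E`
have the largest `p` and `(p₁, q₁)` the least `q` among the others; then
`x_i^{p₀-1} x_j^{q₁-1} x_k^R`, with `R` one less than a suitable `x_k`-exponent of the edge
generators, is such a `u`.
-/

namespace MvPolynomial

variable {K : Type*} [Field K] {σ : Type*} {I : Ideal (MvPolynomial σ K)}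

theorem monomial_mem_iff_exists_minGens_le (b : σ →₀ ℕ) :
    monomial b (1 : K) ∈ I ↔ ∃ g ∈ minGens I, g ≤ b := by
  constructor
  · intro hb
    obtain ⟨g, ⟨hgI, hgb⟩, hmin⟩ := wellFounded_lt.has_min
      {c | monomial c (1 : K) ∈ I ∧ c ≤ b} ⟨b, hb, le_rfl⟩
    exact ⟨g, ⟨hgI, fun c hcI hcg => by_contra fun hne =>
      hmin c ⟨hcI, hcg.trans hgb⟩ (lt_of_le_of_ne hcg hne)⟩, hgb⟩
  · rintro ⟨g, hg, hgb⟩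
    rw [← tsub_add_cancel_of_le hgb, ← one_mul (1 : K), ← monomial_mul]
    exact I.mul_mem_left _ hg.1

theorem IsMonomialIdeal.mem_iff (hI : IsMonomialIdeal I) {p : MvPolynomial σ K} :
    p ∈ I ↔ ∀ m ∈ p.support, monomial m (1 : K) ∈ I := by
  obtain ⟨A, rfl⟩ := hI
  classical
  simp [mem_ideal_span_monomial_image, support_monomial]

theorem mem_span_range_X_iff {p : MvPolynomial σ K} :
    p ∈ Ideal.span (Set.range X) ↔ constantCoeff p = 0 := by
  rw [← Set.image_univ, mem_ideal_span_X_image, constantCoeff_eq, ← notMem_support_iff]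
  constructor
  · intro h h0
    simpa using h 0 h0
  · intro h m hm
    by_contra! hzero
    exact h (by rwa [show m = 0 from Finsupp.ext fun i => hzero i trivial] at hm)

theorem span_range_X_isPrime : (Ideal.span (Set.range X) : Ideal (MvPolynomial σ K)).IsPrime := by
  have : Ideal.span (Set.range X) = RingHom.ker (constantCoeff : MvPolynomial σ K →+* K) :=
    Ideal.ext fun p => mem_span_range_X_iff.trans RingHom.mem_ker.symm
  rw [this]
  exact RingHom.ker_isPrime _

theorem IsMonomialIdeal.span_range_X_mem_associatedPrimes_iff [Finite σ]
    (hI : IsMonomialIdeal I) :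
    Ideal.span (Set.range X) ∈ associatedPrimes (MvPolynomial σ K) (MvPolynomial σ K ⧸ I) ↔
      ∃ u : σ →₀ ℕ, monomial u (1 : K) ∉ I ∧
        ∀ l, monomial (u + Finsupp.single l 1) (1 : K) ∈ I := by
  have mem_colon : ∀ g f : MvPolynomial σ K,
      g ∈ (⊥ : Submodule _ (MvPolynomial σ K ⧸ I)).colon {Ideal.Quotient.mk I f} ↔ g * f ∈ I :=
    fun g f => by
      rw [Submodule.mem_colon_singleton, Submodule.mem_bot, ← Ideal.Quotient.eq_zero_iff_mem]
      rfl
  rw [associatedPrimes, Set.mem_ofPred_eq, isAssociatedPrime_iff]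
  constructor
  · rintro ⟨hprime, x, hx⟩
    obtain ⟨f, rfl⟩ := Ideal.Quotient.mk_surjective x
    have hXf : ∀ l, X l * f ∈ I := fun l =>
      (mem_colon _ _).1 (hx ▸ Ideal.subset_span ⟨l, rfl⟩)
    have hfI : f ∉ I := fun hf => hprime.ne_top <| hx ▸ Ideal.eq_top_of_isUnit_mem _
      ((mem_colon 1 f).2 (by rwa [one_mul])) isUnit_one
    obtain ⟨v, hv, hvI⟩ : ∃ v ∈ f.support, monomial v (1 : K) ∉ I := by
      by_contra! h
      exact hfI (hI.mem_iff.2 h)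
    refine ⟨v, hvI, fun l => hI.mem_iff.1 (hXf l) _ ?_⟩
    rw [mem_support_iff, add_comm, coeff_X_mul]
    exact mem_support_iff.1 hv
  · rintro ⟨u, huI, hu⟩
    refine ⟨span_range_X_isPrime, Ideal.Quotient.mk I (monomial u 1), le_antisymm ?_ ?_⟩
    · rw [Ideal.span_le]
      rintro _ ⟨l, rfl⟩
      rw [SetLike.mem_coe, mem_colon, mul_comm, ← pow_one (X l), ← monomial_add_single]
      exact hu l
    · intro g hg
      rw [mem_colon] at hg
      rw [mem_span_range_X_iff]
      by_contra hg0
      refine huI (hI.mem_iff.1 hg u ?_)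
      rwa [mem_support_iff, coeff_mul_monomial', if_pos le_rfl, tsub_self, mul_one,
        ← constantCoeff_eq]

end MvPolynomial

section FinThree

variable {i j k : Fin 3}

theorem Fin.three_eq_or_eq_or_eq (hij : i ≠ j) (hjk : j ≠ k) (hik : i ≠ k)
    (u : Fin 3) : u = i ∨ u = j ∨ u = k := by
  revert i j k u
  decide

theorem Fin.three_finset_card_eq_two (hij : i ≠ j) (hjk : j ≠ k) (hik : i ≠ k)
    {s : Finset (Fin 3)} (hs : s.card = 2) : s = {i, j} ∨ s = {i, k} ∨ s = {j, k} := by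
  revert i j k s
  decide

theorem Fin.three_range_eq {α : Type*} (hij : i ≠ j) (hjk : j ≠ k)
    (hik : i ≠ k) (f : Fin 3 → α) : Set.range f = {f i, f j, f k} := by
  ext x
  simp only [Set.mem_range, Set.mem_insert_iff, Set.mem_singleton_iff]
  constructor
  · rintro ⟨l, rfl⟩
    rcases Fin.three_eq_or_eq_or_eq hij hjk hik l with rfl | rfl | rfl <;> simp
  · rintro (rfl | rfl | rfl) <;> exact ⟨_, rfl⟩

end FinThree

/-- The exponents `(P, Q, R)` of the monomials `x_i^P x_j^Q x_k^R` in the ideal generated by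
the `x_i^p x_j^q` with `(p, q) ∈ E`, by `x_i^c x_k^d` and by `x_j^e x_k^f`. -/
def TriangleMem (E : Set (ℕ × ℕ)) (c d e f P Q R : ℕ) : Prop :=
  (∃ x ∈ E, x ≤ (P, Q)) ∨ (c ≤ P ∧ d ≤ R) ∨ (e ≤ Q ∧ f ≤ R)

def HasCorner (M : ℕ → ℕ → ℕ → Prop) : Prop :=
  ∃ P Q R, ¬ M P Q R ∧ M (P + 1) Q R ∧ M P (Q + 1) R ∧ M P Q (R + 1)

section Staircase

variable {E : Set (ℕ × ℕ)} {c d e f : ℕ}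

theorem exists_mem_forall_snd_le (hE : E.Nonempty) : ∃ x ∈ E, ∀ y ∈ E, x.2 ≤ y.2 := by
  obtain ⟨x, hx, hmin⟩ := (measure Prod.snd).wf.has_min E hE
  exact ⟨x, hx, fun y hy => not_lt.1 (hmin y hy)⟩

theorem exists_fst_gt_of_isAntichain (hE : IsAntichain (· ≤ ·) E) (hne : E.Nonempty) :
    ∃ x ∈ E, ∀ y ∈ E, y ≠ x → y.1 < x.1 ∧ x.2 < y.2 := by
  obtain ⟨x, hx, hmin⟩ := exists_mem_forall_snd_le hne
  refine ⟨x, hx, fun y hy hyx => ?_⟩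
  have h1 : y.1 < x.1 := not_le.1 fun h => hE hx hy hyx.symm ⟨h, hmin y hy⟩
  exact ⟨h1, (hmin y hy).lt_of_ne fun h => hE hy hx hyx ⟨h1.le, h.ge⟩⟩

theorem bddAbove_image_fst_of_isAntichain (hE : IsAntichain (· ≤ ·) E) :
    BddAbove (Prod.fst '' E) := by
  rcases E.eq_empty_or_nonempty with rfl | hne
  · simp
  obtain ⟨x, hx, hmax⟩ := exists_fst_gt_of_isAntichain hE hne
  refine ⟨x.1, ?_⟩
  rintro _ ⟨y, hy, rfl⟩
  rcases eq_or_ne y x with rfl | hyx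
  exacts [le_rfl, (hmax y hy hyx).1.le]

theorem isAntichain_preimage_swap (hE : IsAntichain (· ≤ ·) E) :
    IsAntichain (· ≤ ·) (Prod.swap ⁻¹' E) :=
  fun _ hx _ hy hne hle => hE hx hy (Prod.swap_injective.ne hne) (Prod.swap_le_swap.2 hle)

theorem triangleMem_preimage_swap {P Q R : ℕ} :
    TriangleMem (Prod.swap ⁻¹' E) e f c d Q P R ↔ TriangleMem E c d e f P Q R := by
  simp only [TriangleMem, Set.mem_preimage]
  constructor <;> rintro (⟨x, hx, hle⟩ | h | h)
  any_goals exact Or.inl ⟨x.swap, hx, Prod.swap_le_swap.2 hle⟩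
  all_goals tauto

theorem not_hasCorner_triangleMem (hc : ∀ x ∈ E, x.1 ≤ c) (he : ∀ x ∈ E, x.2 ≤ e) :
    ¬ HasCorner (TriangleMem E c d e f) := by
  rintro ⟨P, Q, R, hout, hP, hQ, hR⟩
  apply hout
  rcases hR with ⟨x, hx, hxle⟩ | ⟨hcP, -⟩ | ⟨heQ, -⟩
  · exact Or.inl ⟨x, hx, hxle⟩
  · rcases hP with ⟨x, hx, -, hxQ⟩ | ⟨-, hdR⟩ | hjk
    · exact Or.inl ⟨x, hx, (hc x hx).trans hcP, hxQ⟩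
    · exact Or.inr (Or.inl ⟨hcP, hdR⟩)
    · exact Or.inr (Or.inr hjk)
  · rcases hQ with ⟨x, hx, hxP, -⟩ | hik | ⟨-, hfR⟩
    · exact Or.inl ⟨x, hx, hxP, (he x hx).trans heQ⟩
    · exact Or.inr (Or.inl hik)
    · exact Or.inr (Or.inr ⟨heQ, hfR⟩)

theorem hasCorner_triangleMem (hE : IsAntichain (· ≤ ·) E) {y z : ℕ × ℕ} (hy : y ∈ E)
    (hz : z ∈ E) (hyz : y ≠ z) (hd : 1 ≤ d) (hf : 1 ≤ f) (hc : ∃ x ∈ E, c < x.1) :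
    HasCorner (TriangleMem E c d e f) := by
  obtain ⟨x₀, hx₀, hx₀max⟩ := exists_fst_gt_of_isAntichain hE ⟨y, hy⟩
  obtain ⟨x₁, ⟨hx₁, hx₁₀⟩, hx₁min⟩ := exists_mem_forall_snd_le (E := {x ∈ E | x ≠ x₀})
    (by by_cases h : y = x₀; exacts [⟨z, hz, h ▸ hyz.symm⟩, ⟨y, hy, h⟩])
  obtain ⟨hx₁₀fst, hx₁₀snd⟩ := hx₀max x₁ hx₁ hx₁₀
  have hcx₀ : c < x₀.1 := by
    obtain ⟨x, hx, hcx⟩ := hc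
    rcases eq_or_ne x x₀ with rfl | hxx₀
    exacts [hcx, hcx.trans (hx₀max x hx hxx₀).1]
  -- Below `(x₀.1 - 1, x₁.2 - 1)` no point of `E` remains; `R` is chosen so that exactly one
  -- more factor of `x_k` completes `x_i^c x_k^d` or `x_j^e x_k^f`.
  refine ⟨x₀.1 - 1, x₁.2 - 1, (if e ≤ x₁.2 - 1 then min d f else d) - 1, ?_, ?_, ?_, ?_⟩
  · rintro (⟨x, hx, hxP, hxQ⟩ | ⟨-, hdR⟩ | ⟨heQ, hfR⟩)
    · have hxx₀ : x ≠ x₀ := by rintro rfl; simp only at hxP; omega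
      have := hx₁min x ⟨hx, hxx₀⟩
      simp only at hxQ
      omega
    · have := min_le_left d f
      split_ifs at hdR <;> omega
    · have := min_le_right d f
      rw [if_pos heQ] at hfR
      omega
  · exact Or.inl ⟨x₀, hx₀, Prod.le_def.2 ⟨by omega, by omega⟩⟩
  · exact Or.inl ⟨x₁, hx₁, Prod.le_def.2 ⟨by omega, by omega⟩⟩
  · by_cases heQ : e ≤ x₁.2 - 1
    · rw [if_pos heQ]
      rcases le_total d f with hdf | hfd
      · exact Or.inr (Or.inl ⟨by omega, by rw [min_eq_left hdf]; omega⟩)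
      · exact Or.inr (Or.inr ⟨heQ, by rw [min_eq_right hfd]; omega⟩)
    · rw [if_neg heQ]
      exact Or.inr (Or.inl ⟨by omega, by omega⟩)

theorem hasCorner_triangleMem_of_preimage_swap
    (h : HasCorner (TriangleMem (Prod.swap ⁻¹' E) e f c d)) :
    HasCorner (TriangleMem E c d e f) := by
  obtain ⟨Q, P, R, h₀, hQ, hP, hR⟩ := h
  simp only [triangleMem_preimage_swap] at h₀ hQ hP hR
  exact ⟨P, Q, R, h₀, hP, hQ, hR⟩

theorem bddAbove_image_snd_of_isAntichain (hE : IsAntichain (· ≤ ·) E) :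
    BddAbove (Prod.snd '' E) := by
  simpa [← Set.image_swap_eq_preimage_swap, Set.image_image] using
    bddAbove_image_fst_of_isAntichain (isAntichain_preimage_swap hE)

theorem not_hasCorner_triangleMem_iff (hE : IsAntichain (· ≤ ·) E) {y z : ℕ × ℕ} (hy : y ∈ E)
    (hz : z ∈ E) (hyz : y ≠ z) (hd : 1 ≤ d) (hf : 1 ≤ f) :
    ¬ HasCorner (TriangleMem E c d e f) ↔ sSup (Prod.fst '' E) ≤ c ∧ sSup (Prod.snd '' E) ≤ e := by
  rw [csSup_le_iff (bddAbove_image_fst_of_isAntichain hE) ⟨_, y, hy, rfl⟩,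
    csSup_le_iff (bddAbove_image_snd_of_isAntichain hE) ⟨_, y, hy, rfl⟩,
    Set.forall_mem_image, Set.forall_mem_image]
  refine ⟨fun h => ⟨fun x hx => ?_, fun x hx => ?_⟩,
    fun ⟨hc, he⟩ => not_hasCorner_triangleMem hc he⟩
  · by_contra! hcx
    exact h (hasCorner_triangleMem hE hy hz hyz hd hf ⟨x, hx, hcx⟩)
  · by_contra! hex
    refine h (hasCorner_triangleMem_of_preimage_swap ?_)
    exact hasCorner_triangleMem (isAntichain_preimage_swap hE) (y := y.swap) (z := z.swap)
      hy hz (Prod.swap_injective.ne hyz) hf hd ⟨x.swap, hx, hex⟩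

end Staircase

section EdgeExponents

variable {K : Type*} [Field K] {σ : Type*} [DecidableEq σ] {I : Ideal (MvPolynomial σ K)}

def edgeExponents (I : Ideal (MvPolynomial σ K)) (i j : σ) : Set (ℕ × ℕ) :=
  (fun g => (g i, g j)) '' supportedOn I i j

theorem supportedOn_comm (I : Ideal (MvPolynomial σ K)) (i j : σ) :
    supportedOn I i j = supportedOn I j i := by
  ext g
  simp only [supportedOn, Set.mem_ofPred_eq, Finset.pair_comm]

theorem le_iff_of_mem_supportedOn {i j : σ} {g : σ →₀ ℕ} (hg : g ∈ supportedOn I i j)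
    (h : σ →₀ ℕ) : g ≤ h ↔ g i ≤ h i ∧ g j ≤ h j := by
  simp [Finsupp.le_iff, hg.2]

theorem muExp_eq_sSup_fst (I : Ideal (MvPolynomial σ K)) (i j : σ) :
    muExp I i j = sSup (Prod.fst '' edgeExponents I i j) := by
  rw [edgeExponents, Set.image_image]
  rfl

theorem muExp_eq_sSup_snd (I : Ideal (MvPolynomial σ K)) (i j : σ) :
    muExp I j i = sSup (Prod.snd '' edgeExponents I i j) := by
  rw [edgeExponents, Set.image_image, supportedOn_comm]
  rfl

theorem isAntichain_edgeExponents (i j : σ) : IsAntichain (· ≤ ·) (edgeExponents I i j) := by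
  rintro _ ⟨g, hg, rfl⟩ _ ⟨h, hh, rfl⟩ hne hle
  exact hne (by rw [hh.1.2 g hg.1.1 ((le_iff_of_mem_supportedOn hg h).2 hle)])

theorem injOn_coords_supportedOn (i j : σ) : Set.InjOn (fun g => (g i, g j)) (supportedOn I i j) :=
  fun g hg h hh hgh => hh.1.2 g hg.1.1
    ((le_iff_of_mem_supportedOn hg h).2 (Prod.mk_le_mk.1 (le_of_eq hgh)))

end EdgeExponents

section TriangleIdeal

variable {K : Type*} [Field K] {I : Ideal (MvPolynomial (Fin 3) K)} {i j k : Fin 3}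

theorem exists_add_single_iff_hasCorner (hij : i ≠ j) (hjk : j ≠ k)
    (hik : i ≠ k) (M : ℕ → ℕ → ℕ → Prop) :
    (∃ u : Fin 3 →₀ ℕ, ¬ M (u i) (u j) (u k) ∧ ∀ l,
      M ((u + Finsupp.single l 1 :) i) ((u + Finsupp.single l 1 :) j)
        ((u + Finsupp.single l 1 :) k)) ↔ HasCorner M := by
  constructor
  · rintro ⟨u, h₀, hu⟩
    refine ⟨u i, u j, u k, h₀, ?_, ?_, ?_⟩
    · simpa [Finsupp.single_apply, hij, hik] using hu i
    · simpa [Finsupp.single_apply, hij.symm, hjk] using hu j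
    · simpa [Finsupp.single_apply, hik.symm, hjk.symm] using hu k
  · rintro ⟨P, Q, R, h₀, hP, hQ, hR⟩
    refine ⟨Finsupp.single i P + Finsupp.single j Q + Finsupp.single k R, ?_, fun l => ?_⟩
    · simpa [Finsupp.single_apply, hij, hjk, hik, hij.symm, hjk.symm, hik.symm] using h₀
    · rcases Fin.three_eq_or_eq_or_eq hij hjk hik l with rfl | rfl | rfl
      · simpa [Finsupp.single_apply, hij, hjk, hik, hij.symm, hjk.symm, hik.symm] using hP
      · simpa [Finsupp.single_apply, hij, hjk, hik, hij.symm, hjk.symm, hik.symm] using hQ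
      · simpa [Finsupp.single_apply, hij, hjk, hik, hij.symm, hjk.symm, hik.symm] using hR

theorem IsSupportTwo.mem_minGens_iff (hI : IsSupportTwo I) (hij : i ≠ j) (hjk : j ≠ k)
    (hik : i ≠ k) {g : Fin 3 →₀ ℕ} :
    g ∈ minGens I ↔ g ∈ supportedOn I i j ∨ g ∈ supportedOn I i k ∨ g ∈ supportedOn I j k := by
  refine ⟨fun hg => ?_, by rintro (hg | hg | hg) <;> exact hg.1⟩
  simpa [supportedOn, hg] using Fin.three_finset_card_eq_two hij hjk hik (hI g hg)

theorem monomial_mem_iff_triangleMem (hI : IsSupportTwo I) (hij : i ≠ j) (hjk : j ≠ k)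
    (hik : i ≠ k) {wik wki wjk wkj : ℕ}
    (hik' : supportedOn I i k = {Finsupp.single i wik + Finsupp.single k wki})
    (hjk' : supportedOn I j k = {Finsupp.single j wjk + Finsupp.single k wkj})
    (u : Fin 3 →₀ ℕ) :
    MvPolynomial.monomial u (1 : K) ∈ I ↔
      TriangleMem (edgeExponents I i j) wik wki wjk wkj (u i) (u j) (u k) := by
  have hgik := le_iff_of_mem_supportedOn (hik' ▸ Set.mem_singleton _) u
  have hgjk := le_iff_of_mem_supportedOn (hjk' ▸ Set.mem_singleton _) u
  simp only [Finsupp.add_apply, Finsupp.single_apply, hik, hjk, hik.symm, hjk.symm, if_true,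
    if_false, add_zero, zero_add] at hgik hgjk
  rw [MvPolynomial.monomial_mem_iff_exists_minGens_le, TriangleMem, edgeExponents,
    Set.exists_mem_image]
  simp only [hI.mem_minGens_iff hij hjk hik, hik', hjk', Set.mem_singleton_iff, or_and_right,
    exists_or, exists_eq_left, hgik, hgjk]
  exact or_congr_left <| exists_congr fun g => and_congr_right fun hg =>
    (le_iff_of_mem_supportedOn hg u).trans Prod.mk_le_mk.symm

end TriangleIdeal

theorem stmt17_general {K : Type*} [Field K] (I : Ideal (MvPolynomial (Fin 3) K))
    (hmon : IsMonomialIdeal I) (h2 : IsSupportTwo I)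
    (i j k : Fin 3) (hij : i ≠ j) (hjk : j ≠ k) (hik : i ≠ k)
    (wik wki wjk wkj : ℕ) (h2' : 1 ≤ wki) (h4 : 1 ≤ wkj)
    (hik' : supportedOn I i k = {Finsupp.single i wik + Finsupp.single k wki})
    (hjk' : supportedOn I j k = {Finsupp.single j wjk + Finsupp.single k wkj})
    (a b : Fin 3 →₀ ℕ) (ha : a ∈ supportedOn I i j)
    (hb : b ∈ supportedOn I i j) (hab : a ≠ b) :
    (Ideal.span {(X i : MvPolynomial (Fin 3) K), X j, X k} ∉
      associatedPrimes (MvPolynomial (Fin 3) K) (MvPolynomial (Fin 3) K ⧸ I)) ↔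
    (muExp I i j ≤ wik ∧ muExp I j i ≤ wjk) := by
  rw [← Fin.three_range_eq hij hjk hik, hmon.span_range_X_mem_associatedPrimes_iff]
  simp only [monomial_mem_iff_triangleMem (K := K) h2 hij hjk hik hik' hjk']
  rw [exists_add_single_iff_hasCorner hij hjk hik, muExp_eq_sSup_fst, muExp_eq_sSup_snd]
  exact not_hasCorner_triangleMem_iff (isAntichain_edgeExponents i j) ⟨a, ha, rfl⟩ ⟨b, hb, rfl⟩
    (fun h => hab (injOn_coords_supportedOn i j ha hb h)) h2' h4

theorem stmt17 {K : Type*} [Field K] (I : Ideal (MvPolynomial (Fin 3) K))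
    (hmon : IsMonomialIdeal I) (h2 : IsSupportTwo I)
    (i j k : Fin 3) (hij : i ≠ j) (hjk : j ≠ k) (hik : i ≠ k)
    (htri : ∀ u v : Fin 3, (underGraph I).Adj u v ↔ u ≠ v)
    (wik wki wjk wkj : ℕ) (h1 : 1 ≤ wik) (h2' : 1 ≤ wki) (h3 : 1 ≤ wjk) (h4 : 1 ≤ wkj)
    (hik' : supportedOn I i k = {Finsupp.single i wik + Finsupp.single k wki})
    (hjk' : supportedOn I j k = {Finsupp.single j wjk + Finsupp.single k wkj})
    (a b : Fin 3 →₀ ℕ) (ha : a ∈ supportedOn I i j)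
    (hb : b ∈ supportedOn I i j) (hab : a ≠ b) :
    (Ideal.span {(X i : MvPolynomial (Fin 3) K), X j, X k} ∉
      associatedPrimes (MvPolynomial (Fin 3) K) (MvPolynomial (Fin 3) K ⧸ I)) ↔
    (muExp I i j ≤ wik ∧ muExp I j i ≤ wjk) :=
  stmt17_general I hmon h2 i j k hij hjk hik wik wki wjk wkj h2' h4 hik' hjk' a b ha hb hab
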